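/- arXiv:1912.12375 — 6 statements merged into one kernel-verified Lean document; each statement's English description precedes it below -/
import Mathlib

section
/- Let c : I → ℝ^6 be a solution of the Kepler–Heisenberg Hamilton equations on a maximal open interval I, with H(c(t)) = 0 for all t ∈ I and (x(t), y(t)) ≠ (0, 0) for all t ∈ I, and suppose z has consecutive zeros t₀ < t₁ < t₂. If s(t₂) = s(t₀) (i.e. the dilation factor λ = exp(s(t₂) − s(t₀)) equals 1), then, with φ = θ(t₂) − θ(t₀) and T = t₂ − t₀, the orbit is quasi-periodic: for every t ∈ I with t + T ∈ I, c(t + T) = ρ_φ(c(t)). -/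
open Real Set

/-- The Kepler-Heisenberg Hamiltonian on phase space `ℝ^6` with coordinates
`(x, y, z, pₓ, p_y, p_z)`. -/
noncomputable def KH (x y z px py pz : ℝ) : ℝ :=
  (1/2) * ((px - (1/2) * y * pz)^2 + (py + (1/2) * x * pz)^2)
    - 1 / (8 * π * Real.sqrt ((x^2 + y^2)^2 + 16 * z^2))

/-- The adapted coordinate `s = (1/4)·log((x² + y²)² + 16z²)`. -/
noncomputable def sCoord (x y z : ℝ) : ℝ :=
  (1/4) * Real.log ((x^2 + y^2)^2 + 16 * z^2)

/-- The adapted coordinate `u = arctan(4z/(x² + y²))`. -/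
noncomputable def uCoord (x y z : ℝ) : ℝ :=
  Real.arctan (4 * z / (x^2 + y^2))

/-- The dilational momentum `J = p_s = x·pₓ + y·p_y + 2z·p_z`. -/
def Jmom (x y z px py pz : ℝ) : ℝ := x * px + y * py + 2 * z * pz

/-- The angular momentum `p_θ = x·p_y − y·pₓ`. -/
def pTheta (x y px py : ℝ) : ℝ := x * py - y * px

/-- The adapted momentum coordinate `p_u`. -/
noncomputable def pU (x y z px py pz : ℝ) : ℝ :=
  (1/4) * pz * (x^2 + y^2) - 2 * z * (x * px + y * py) / (x^2 + y^2)

/-- Rotation by angle `φ` about the `z`-axis, lifted to phase space. -/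
noncomputable def rot (φ : ℝ) (q : ℝ × ℝ × ℝ × ℝ × ℝ × ℝ) : ℝ × ℝ × ℝ × ℝ × ℝ × ℝ :=
  (q.1 * Real.cos φ - q.2.1 * Real.sin φ,
   q.1 * Real.sin φ + q.2.1 * Real.cos φ,
   q.2.2.1,
   q.2.2.2.1 * Real.cos φ - q.2.2.2.2.1 * Real.sin φ,
   q.2.2.2.1 * Real.sin φ + q.2.2.2.2.1 * Real.cos φ,
   q.2.2.2.2.2)

/-- The Carnot dilation by `λ > 0`, lifted to phase space:
`δ_λ(x, y, z, pₓ, p_y, p_z) = (λx, λy, λ²z, λ⁻¹pₓ, λ⁻¹p_y, λ⁻²p_z)`. -/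
noncomputable def dil (l : ℝ) (q : ℝ × ℝ × ℝ × ℝ × ℝ × ℝ) : ℝ × ℝ × ℝ × ℝ × ℝ × ℝ :=
  (l * q.1, l * q.2.1, l^2 * q.2.2.1,
   l⁻¹ * q.2.2.2.1, l⁻¹ * q.2.2.2.2.1, (l^2)⁻¹ * q.2.2.2.2.2)

/-- The Hamiltonian as a function on the product phase space. -/
noncomputable def KH6 (q : ℝ × ℝ × ℝ × ℝ × ℝ × ℝ) : ℝ :=
  KH q.1 q.2.1 q.2.2.1 q.2.2.2.1 q.2.2.2.2.1 q.2.2.2.2.2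

/-- `c = (x, y, z, pₓ, p_y, p_z)` is a solution of Hamilton's equations for `KH` on the
open interval `I`: each coordinate function is differentiable with derivative given by the
corresponding (signed) partial derivative of `KH`, and the position avoids the origin. -/
def IsSolutionOn (I : Set ℝ) (x y z px py pz : ℝ → ℝ) : Prop :=
  IsOpen I ∧ I.OrdConnected ∧ I.Nonempty ∧
  (∀ t ∈ I, (x t, y t, z t) ≠ (0, 0, 0)) ∧
  (∀ t ∈ I,
    HasDerivAt x (deriv (fun a => KH (x t) (y t) (z t) a (py t) (pz t)) (px t)) t ∧
    HasDerivAt y (deriv (fun a => KH (x t) (y t) (z t) (px t) a (pz t)) (py t)) t ∧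
    HasDerivAt z (deriv (fun a => KH (x t) (y t) (z t) (px t) (py t) a) (pz t)) t ∧
    HasDerivAt px (-(deriv (fun a => KH a (y t) (z t) (px t) (py t) (pz t)) (x t))) t ∧
    HasDerivAt py (-(deriv (fun a => KH (x t) a (z t) (px t) (py t) (pz t)) (y t))) t ∧
    HasDerivAt pz (-(deriv (fun a => KH (x t) (y t) a (px t) (py t) (pz t)) (z t))) t)

/-- A solution on a maximal open interval: it cannot be extended to a solution on any
strictly larger open interval. -/
def IsMaximalSolution (I : Set ℝ) (x y z px py pz : ℝ → ℝ) : Prop :=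
  IsSolutionOn I x y z px py pz ∧
  ∀ (I' : Set ℝ) (x' y' z' px' py' pz' : ℝ → ℝ),
    IsSolutionOn I' x' y' z' px' py' pz' → I ⊆ I' →
    (∀ t ∈ I, x' t = x t ∧ y' t = y t ∧ z' t = z t ∧
      px' t = px t ∧ py' t = py t ∧ pz' t = pz t) →
    I' = I

/-!
Along a zero-energy solution the dilational momentum `Jmom` has derivative `2 * KH = 0`, and the
angular momentum `pTheta` is conserved. Where `z` vanishes, zero energy reads
`Jmom² + (2ż)² = 1/(4π)`, so `|ż|` takes the same value at `t₀, t₁, t₂`. If `z` keeps its sign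
across `t₁`, then `ż(t₁) = 0` and all three vanish; otherwise `z` changes sign at `t₁` and `ż(t₀)`,
`ż(t₂)` have the same sign. Hence `ż(t₂) = ż(t₀)`. With `x² + y²` equal at `t₀` and `t₂` (this is
`s(t₂) = s(t₀)`) and `2ż = pTheta + p_z (x² + y²) / 2`, also `p_z` agrees; `Jmom` and `pTheta`
then determine the horizontal momenta from the position, so `c(t₂) = ρ_φ(c(t₀))`. The Hamiltonian
vector field commutes with rotations, so `t ↦ c(t + T)` and `t ↦ ρ_φ(c(t))` solve the same ODE and
agree at `t₀`, hence everywhere.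
-/

open Filter Topology

theorem HasDerivAt.fst {𝕜 E F : Type*} [NontriviallyNormedField 𝕜] [NormedAddCommGroup E]
    [NormedSpace 𝕜 E] [NormedAddCommGroup F] [NormedSpace 𝕜 F] {f : 𝕜 → E × F} {f' : E × F}
    {t : 𝕜} (h : HasDerivAt f f' t) : HasDerivAt (fun t => (f t).1) f'.1 t :=
  (hasFDerivAt_fst (p := f t)).comp_hasDerivAt t h

theorem HasDerivAt.snd {𝕜 E F : Type*} [NontriviallyNormedField 𝕜] [NormedAddCommGroup E]
    [NormedSpace 𝕜 E] [NormedAddCommGroup F] [NormedSpace 𝕜 F] {f : 𝕜 → E × F} {f' : E × F}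
    {t : 𝕜} (h : HasDerivAt f f' t) : HasDerivAt (fun t => (f t).2) f'.2 t :=
  (hasFDerivAt_snd (p := f t)).comp_hasDerivAt t h

theorem ODE_solution_unique_of_isPreconnected {E : Type*} [NormedAddCommGroup E]
    [NormedSpace ℝ E] {v : E → E} {J : Set ℝ} {f g : ℝ → E} {t₀ : ℝ}
    (hJ : IsOpen J) (hJc : IsPreconnected J)
    (hv : ∀ t ∈ J, ∃ K, ∃ U ∈ 𝓝 (f t), LipschitzOnWith K v U)
    (hf : ∀ t ∈ J, HasDerivAt f (v (f t)) t) (hg : ∀ t ∈ J, HasDerivAt g (v (g t)) t)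
    (ht₀ : t₀ ∈ J) (heq : f t₀ = g t₀) : EqOn f g J := by
  have hloc : ∀ t ∈ J, f t = g t → f =ᶠ[𝓝 t] g := by
    intro t ht hfg
    obtain ⟨K, U, hU, hLip⟩ := hv t ht
    have hJt : ∀ᶠ s in 𝓝 t, s ∈ J := hJ.mem_nhds ht
    refine ODE_solution_unique_of_eventually (v := fun _ => v) (s := fun _ => U)
      (Eventually.of_forall fun _ => hLip) ?_ ?_ hfg
    · filter_upwards [hJt, (hf t ht).continuousAt.preimage_mem_nhds hU] with s hs hsU
      exact ⟨hf s hs, hsU⟩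
    · filter_upwards [hJt, (hg t ht).continuousAt.preimage_mem_nhds (hfg ▸ hU)] with s hs hsU
      exact ⟨hg s hs, hsU⟩
  have hsub : J ⊆ {t | f =ᶠ[𝓝 t] g} := by
    refine hJc.subset_of_closure_inter_subset isOpen_setOfPred_eventually_nhds
      ⟨t₀, ht₀, hloc t₀ ht₀ heq⟩ ?_
    rintro t ⟨htc, ht⟩
    refine hloc t ht (by_contra fun hne => ?_)
    have hne' := ((hf t ht).continuousAt.prodMk (hg t ht).continuousAt).eventually
      (isOpen_ne_fun continuous_fst continuous_snd |>.mem_nhds hne)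
    obtain ⟨s, hs, hsu⟩ := (mem_closure_iff_frequently.1 htc).and_eventually hne' |>.exists
    exact hsu hs.self_of_nhds
  exact fun t ht => (hsub ht).self_of_nhds

theorem IsPreconnected.pos_or_neg_of_ne_zero {s : Set ℝ} {f : ℝ → ℝ} (hs : IsPreconnected s)
    (hf : ContinuousOn f s) (hne : ∀ t ∈ s, f t ≠ 0) :
    (∀ t ∈ s, 0 < f t) ∨ (∀ t ∈ s, f t < 0) := by
  by_contra! h
  obtain ⟨⟨a, ha, hfa⟩, ⟨b, hb, hfb⟩⟩ := h
  obtain ⟨c, hc, hfc⟩ := hs.intermediate_value ha hb hf ⟨hfa, hfb⟩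
  exact hne c hc hfc

theorem HasDerivAt.nonneg_of_zero_of_pos_right {f : ℝ → ℝ} {d a b : ℝ} (hd : HasDerivAt f d a)
    (ha : f a = 0) (hab : a < b) (hpos : ∀ t ∈ Ioo a b, 0 < f t) : 0 ≤ d := by
  refine ge_of_tendsto ((hasDerivWithinAt_iff_tendsto_slope' (s := Ioi a) (lt_irrefl a)).1
    hd.hasDerivWithinAt) ?_
  filter_upwards [Ioo_mem_nhdsGT hab] with t ht
  rw [slope_def_field, ha, sub_zero]
  exact (div_pos (hpos t ht) (sub_pos.2 ht.1)).le

theorem HasDerivAt.nonneg_of_zero_of_neg_left {f : ℝ → ℝ} {d a b : ℝ} (hd : HasDerivAt f d b)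
    (hb : f b = 0) (hab : a < b) (hneg : ∀ t ∈ Ioo a b, f t < 0) : 0 ≤ d := by
  refine ge_of_tendsto ((hasDerivWithinAt_iff_tendsto_slope' (s := Iio b) (lt_irrefl b)).1
    hd.hasDerivWithinAt) ?_
  filter_upwards [Ioo_mem_nhdsLT hab] with t ht
  rw [slope_def_field, hb, sub_zero]
  exact (div_pos_of_neg_of_neg (hneg t ht) (sub_neg.2 ht.2)).le

theorem HasDerivAt.eq_of_consecutive_zeros {f : ℝ → ℝ} {t₀ t₁ t₂ d₀ d₁ d₂ : ℝ}
    (h₀ : HasDerivAt f d₀ t₀) (h₁ : HasDerivAt f d₁ t₁) (h₂ : HasDerivAt f d₂ t₂)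
    (ht₀₁ : t₀ < t₁) (ht₁₂ : t₁ < t₂) (hf₀ : f t₀ = 0) (hf₁ : f t₁ = 0) (hf₂ : f t₂ = 0)
    (hne : ∀ t ∈ Ioo t₀ t₁ ∪ Ioo t₁ t₂, f t ≠ 0) (hf : ContinuousOn f (Icc t₀ t₂))
    (hd₁ : d₁ ^ 2 = d₀ ^ 2) (hd₂ : d₂ ^ 2 = d₀ ^ 2) : d₂ = d₀ := by
  wlog hpos : ∀ t ∈ Ioo t₀ t₁, 0 < f t generalizing f d₀ d₁ d₂
  · have hneg : ∀ t ∈ Ioo t₀ t₁, f t < 0 :=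
      (isPreconnected_Ioo.pos_or_neg_of_ne_zero (hf.mono (Ioo_subset_Icc_self.trans
        (Icc_subset_Icc_right ht₁₂.le))) fun t ht => hne t (Or.inl ht)).resolve_left hpos
    have := this h₀.neg h₁.neg h₂.neg (by simp [hf₀]) (by simp [hf₁]) (by simp [hf₂])
      (fun t ht => neg_ne_zero.2 (hne t ht)) hf.neg (by rw [neg_sq, neg_sq, hd₁])
      (by rw [neg_sq, neg_sq, hd₂]) (fun t ht => neg_pos.2 (hneg t ht))
    exact neg_inj.1 this
  rcases isPreconnected_Ioo.pos_or_neg_of_ne_zero (hf.mono (Ioo_subset_Icc_self.trans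
    (Icc_subset_Icc_left ht₀₁.le))) (fun t ht => hne t (Or.inr ht)) with hpos' | hneg'
  · have hmin : IsLocalMin f t₁ := by
      filter_upwards [Ioo_mem_nhds ht₀₁ ht₁₂] with t ht
      rcases lt_trichotomy t t₁ with h | rfl | h
      · exact hf₁ ▸ (hpos t ⟨ht.1, h⟩).le
      · exact le_rfl
      · exact hf₁ ▸ (hpos' t ⟨h, ht.2⟩).le
    have hd₀ : d₀ = 0 := by
      rw [hmin.hasDerivAt_eq_zero h₁, zero_pow two_ne_zero, eq_comm, sq_eq_zero_iff] at hd₁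
      exact hd₁
    rw [hd₀, zero_pow two_ne_zero, sq_eq_zero_iff] at hd₂
    rw [hd₂, hd₀]
  · exact (sq_eq_sq₀ (h₂.nonneg_of_zero_of_neg_left hf₂ ht₁₂ hneg')
      (h₀.nonneg_of_zero_of_pos_right hf₀ ht₀₁ hpos)).1 hd₂

theorem rot_polar {x y x' y' r θ θ' : ℝ} (hx : x = r * cos θ) (hy : y = r * sin θ)
    (hx' : x' = r * cos θ') (hy' : y' = r * sin θ') :
    x' = x * cos (θ' - θ) - y * sin (θ' - θ) ∧ y' = x * sin (θ' - θ) + y * cos (θ' - θ) := by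
  have hθ' : θ' = θ + (θ' - θ) := by ring
  rw [hx', hy', hx, hy, hθ', cos_add, sin_add, add_sub_cancel_left]
  constructor <;> ring

theorem momentum_eq_rot {x y px py x' y' px' py' φ : ℝ} (hR : 0 < x' ^ 2 + y' ^ 2)
    (hx' : x' = x * cos φ - y * sin φ) (hy' : y' = x * sin φ + y * cos φ)
    (hJ : x' * px' + y' * py' = x * px + y * py) (hL : pTheta x' y' px' py' = pTheta x y px py) :
    px' = px * cos φ - py * sin φ ∧ py' = px * sin φ + py * cos φ := by
  have hcs := sin_sq_add_cos_sq φ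
  unfold pTheta at hL
  subst hx' hy'
  constructor <;> refine mul_left_cancel₀ hR.ne' ?_
  · linear_combination (x * cos φ - y * sin φ) * hJ - (x * sin φ + y * cos φ) * hL
      - (x ^ 2 + y ^ 2) * (px * cos φ - py * sin φ) * hcs
  · linear_combination (x * sin φ + y * cos φ) * hJ + (x * cos φ - y * sin φ) * hL
      - (x ^ 2 + y ^ 2) * (px * sin φ + py * cos φ) * hcs

theorem HasDerivAt.rot {f : ℝ → ℝ × ℝ × ℝ × ℝ × ℝ × ℝ} {f' : ℝ × ℝ × ℝ × ℝ × ℝ × ℝ} {t : ℝ}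
    (h : HasDerivAt f f' t) (φ : ℝ) : HasDerivAt (fun t => rot φ (f t)) (rot φ f') t := by
  have hx := h.fst
  have hy := h.snd.fst
  have hpx := h.snd.snd.snd.fst
  have hpy := h.snd.snd.snd.snd.fst
  exact ((hx.mul_const _).sub (hy.mul_const _)).prodMk
    (((hx.mul_const _).add (hy.mul_const _)).prodMk
      (h.snd.snd.fst.prodMk (((hpx.mul_const _).sub (hpy.mul_const _)).prodMk
        (((hpx.mul_const _).add (hpy.mul_const _)).prodMk h.snd.snd.snd.snd.snd))))

theorem sq_add_sq_pos {x y : ℝ} (h : (x, y) ≠ (0, 0)) : 0 < x ^ 2 + y ^ 2 := by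
  have h' : x ≠ 0 ∨ y ≠ 0 := by
    contrapose! h
    obtain ⟨rfl, rfl⟩ := h
    rfl
  rcases h' with h' | h' <;> positivity

theorem heisenbergGauge_pos {x y z : ℝ} (h : (x, y, z) ≠ (0, 0, 0)) :
    0 < (x ^ 2 + y ^ 2) ^ 2 + 16 * z ^ 2 := by
  have h' : x ≠ 0 ∨ y ≠ 0 ∨ z ≠ 0 := by
    contrapose! h
    obtain ⟨rfl, rfl, rfl⟩ := h
    rfl
  rcases h' with h' | h' | h' <;> positivity

noncomputable def KHField (q : ℝ × ℝ × ℝ × ℝ × ℝ × ℝ) : ℝ × ℝ × ℝ × ℝ × ℝ × ℝ :=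
  let x := q.1; let y := q.2.1; let z := q.2.2.1
  let px := q.2.2.2.1; let py := q.2.2.2.2.1; let pz := q.2.2.2.2.2
  let vx := px - y * pz / 2
  let vy := py + x * pz / 2
  let W := √((x ^ 2 + y ^ 2) ^ 2 + 16 * z ^ 2)
  (vx, vy, (x * vy - y * vx) / 2,
    -(pz * vy / 2) - x * (x ^ 2 + y ^ 2) / (4 * π * W ^ 3),
    pz * vx / 2 - y * (x ^ 2 + y ^ 2) / (4 * π * W ^ 3),
    -(2 * z / (π * W ^ 3)))

theorem contDiffAt_KHField {q : ℝ × ℝ × ℝ × ℝ × ℝ × ℝ}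
    (hq : 0 < (q.1 ^ 2 + q.2.1 ^ 2) ^ 2 + 16 * q.2.2.1 ^ 2) : ContDiffAt ℝ 1 KHField q := by
  unfold KHField
  fun_prop (disch := first | positivity | exact hq.ne')

theorem KHField_rot (φ : ℝ) (q : ℝ × ℝ × ℝ × ℝ × ℝ × ℝ) :
    KHField (rot φ q) = rot φ (KHField q) := by
  obtain ⟨x, y, z, px, py, pz⟩ := q
  have hcs := Real.sin_sq_add_cos_sq φ
  have hR : (x * cos φ - y * sin φ) ^ 2 + (x * sin φ + y * cos φ) ^ 2 = x ^ 2 + y ^ 2 := by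
    linear_combination (x ^ 2 + y ^ 2) * hcs
  simp only [KHField, rot, hR, Prod.mk.injEq]
  refine ⟨by ring, by ring, ?_, by ring, by ring, trivial⟩
  linear_combination (x * (py + x * pz / 2) - y * (px - y * pz / 2)) / 2 * hcs

theorem two_mul_KHField_z (x y z px py pz : ℝ) :
    2 * (KHField (x, y, z, px, py, pz)).2.2.1 = pTheta x y px py + pz * (x ^ 2 + y ^ 2) / 2 := by
  simp only [KHField, pTheta]
  ring

theorem hasDerivAt_KH {X Y Z PX PY PZ : ℝ → ℝ} {X' Y' Z' PX' PY' PZ' a : ℝ}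
    (hX : HasDerivAt X X' a) (hY : HasDerivAt Y Y' a) (hZ : HasDerivAt Z Z' a)
    (hPX : HasDerivAt PX PX' a) (hPY : HasDerivAt PY PY' a) (hPZ : HasDerivAt PZ PZ' a)
    (hρ : 0 < (X a ^ 2 + Y a ^ 2) ^ 2 + 16 * Z a ^ 2) :
    let F := KHField (X a, Y a, Z a, PX a, PY a, PZ a)
    HasDerivAt (fun a => KH (X a) (Y a) (Z a) (PX a) (PY a) (PZ a))
      (F.1 * PX' + F.2.1 * PY' + F.2.2.1 * PZ'
        - F.2.2.2.1 * X' - F.2.2.2.2.1 * Y' - F.2.2.2.2.2 * Z') a := by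
  have hkin := (((hPX.sub ((hY.const_mul (1/2)).mul hPZ)).pow 2).add
    ((hPY.add ((hX.const_mul (1/2)).mul hPZ)).pow 2)).const_mul (1/2)
  have hpot := (hasDerivAt_const a (1:ℝ)).div
    ((((((hX.pow 2).add (hY.pow 2)).pow 2).add ((hZ.pow 2).const_mul 16)).sqrt hρ.ne').const_mul
      (8 * π)) (by positivity)
  intro F
  refine (hkin.sub hpot).congr_deriv ?_
  simp only [F, KHField, Pi.add_apply, Pi.mul_apply, Pi.pow_apply, Pi.sub_apply]
  field_simp
  ring

theorem Jmom_sq_add_sq_of_KH_eq_zero {x y z px py pz : ℝ} (hR : 0 < x ^ 2 + y ^ 2) (hz : z = 0)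
    (h : KH x y z px py pz = 0) :
    Jmom x y z px py pz ^ 2 + (2 * (KHField (x, y, z, px, py, pz)).2.2.1) ^ 2 = 1 / (4 * π) := by
  subst hz
  have hW : √((x ^ 2 + y ^ 2) ^ 2 + 16 * 0 ^ 2) = x ^ 2 + y ^ 2 := by
    rw [zero_pow two_ne_zero, mul_zero, add_zero, Real.sqrt_sq hR.le]
  simp only [KH, hW] at h
  simp only [KHField, Jmom]
  field_simp at h ⊢
  linear_combination h / 2

theorem sq_add_sq_eq_of_sCoord_eq {x y z x' y' z' : ℝ} (hR : 0 < x ^ 2 + y ^ 2)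
    (hR' : 0 < x' ^ 2 + y' ^ 2) (hz : z = 0) (hz' : z' = 0)
    (h : sCoord x y z = sCoord x' y' z') : x ^ 2 + y ^ 2 = x' ^ 2 + y' ^ 2 := by
  subst hz hz'
  simp only [sCoord, zero_pow two_ne_zero, mul_zero, add_zero, mul_eq_mul_left_iff] at h
  have := Real.log_injOn_pos (pow_pos hR 2) (pow_pos hR' 2) (h.resolve_right (by norm_num))
  exact (sq_eq_sq₀ hR.le hR'.le).1 this

namespace IsSolutionOn

variable {I : Set ℝ} {x y z px py pz : ℝ → ℝ}

theorem hasDerivAt (h : IsSolutionOn I x y z px py pz) {t : ℝ} (ht : t ∈ I) :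
    HasDerivAt (fun t => (x t, y t, z t, px t, py t, pz t))
      (KHField (x t, y t, z t, px t, py t, pz t)) t := by
  have hρ := heisenbergGauge_pos (h.2.2.2.1 t ht)
  obtain ⟨hx, hy, hz, hpx, hpy, hpz⟩ := h.2.2.2.2 t ht
  have c (b a : ℝ) : HasDerivAt (fun _ => b) 0 a := hasDerivAt_const a b
  have i (a : ℝ) : HasDerivAt (fun a => a) 1 a := hasDerivAt_id a
  rw [(by simpa using (hasDerivAt_KH (c _ _) (c _ _) (c _ _) (i _) (c _ _) (c _ _) hρ).deriv :
    deriv (fun a => KH (x t) (y t) (z t) a (py t) (pz t)) (px t) = _)] at hx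
  rw [(by simpa using (hasDerivAt_KH (c _ _) (c _ _) (c _ _) (c _ _) (i _) (c _ _) hρ).deriv :
    deriv (fun a => KH (x t) (y t) (z t) (px t) a (pz t)) (py t) = _)] at hy
  rw [(by simpa using (hasDerivAt_KH (c _ _) (c _ _) (c _ _) (c _ _) (c _ _) (i _) hρ).deriv :
    deriv (fun a => KH (x t) (y t) (z t) (px t) (py t) a) (pz t) = _)] at hz
  rw [(by simpa using (hasDerivAt_KH (i _) (c _ _) (c _ _) (c _ _) (c _ _) (c _ _) hρ).deriv :
    deriv (fun a => KH a (y t) (z t) (px t) (py t) (pz t)) (x t) = _)] at hpx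
  rw [(by simpa using (hasDerivAt_KH (c _ _) (i _) (c _ _) (c _ _) (c _ _) (c _ _) hρ).deriv :
    deriv (fun a => KH (x t) a (z t) (px t) (py t) (pz t)) (y t) = _)] at hpy
  rw [(by simpa using (hasDerivAt_KH (c _ _) (c _ _) (i _) (c _ _) (c _ _) (c _ _) hρ).deriv :
    deriv (fun a => KH (x t) (y t) a (px t) (py t) (pz t)) (z t) = _)] at hpz
  simp only [neg_neg] at hpx hpy hpz
  exact hx.prodMk (hy.prodMk (hz.prodMk (hpx.prodMk (hpy.prodMk hpz))))

theorem hasDerivAt_Jmom (h : IsSolutionOn I x y z px py pz) {t : ℝ} (ht : t ∈ I) :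
    HasDerivAt (fun t => Jmom (x t) (y t) (z t) (px t) (py t) (pz t))
      (2 * KH (x t) (y t) (z t) (px t) (py t) (pz t)) t := by
  have hc := h.hasDerivAt ht
  have hρ := heisenbergGauge_pos (h.2.2.2.1 t ht)
  refine (((hc.fst.mul hc.snd.snd.snd.fst).add (hc.snd.fst.mul hc.snd.snd.snd.snd.fst)).add
    ((hc.snd.snd.fst.const_mul 2).mul hc.snd.snd.snd.snd.snd)).congr_deriv ?_
  have hW3 : √((x t ^ 2 + y t ^ 2) ^ 2 + 16 * z t ^ 2) ^ 3 =
      ((x t ^ 2 + y t ^ 2) ^ 2 + 16 * z t ^ 2) * √((x t ^ 2 + y t ^ 2) ^ 2 + 16 * z t ^ 2) := by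
    rw [pow_succ, Real.sq_sqrt hρ.le, mul_comm]
  simp only [KHField, KH, hW3]
  field_simp
  ring

theorem hasDerivAt_pTheta (h : IsSolutionOn I x y z px py pz) {t : ℝ} (ht : t ∈ I) :
    HasDerivAt (fun t => pTheta (x t) (y t) (px t) (py t)) 0 t := by
  have hc := h.hasDerivAt ht
  refine ((hc.fst.mul hc.snd.snd.snd.snd.fst).sub
    (hc.snd.fst.mul hc.snd.snd.snd.fst)).congr_deriv ?_
  simp only [KHField]
  ring

theorem eq_of_hasDerivAt_zero (h : IsSolutionOn I x y z px py pz) {f : ℝ → ℝ}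
    (hf : ∀ t ∈ I, HasDerivAt f 0 t) {a b : ℝ} (ha : a ∈ I) (hb : b ∈ I) : f a = f b :=
  h.1.is_const_of_deriv_eq_zero h.2.1.isPreconnected
    (fun t ht => (hf t ht).differentiableAt.differentiableWithinAt) (fun t ht => (hf t ht).deriv)
    ha hb

theorem add_eq_rot_of_add_eq_rot (h : IsSolutionOn I x y z px py pz) {φ T t₀ : ℝ}
    (ht₀ : t₀ ∈ I) (ht₀T : t₀ + T ∈ I)
    (heq : (x (t₀ + T), y (t₀ + T), z (t₀ + T), px (t₀ + T), py (t₀ + T), pz (t₀ + T)) =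
      rot φ (x t₀, y t₀, z t₀, px t₀, py t₀, pz t₀)) :
    ∀ t ∈ I, t + T ∈ I →
      (x (t + T), y (t + T), z (t + T), px (t + T), py (t + T), pz (t + T)) =
        rot φ (x t, y t, z t, px t, py t, pz t) := by
  have hJ : IsOpen (I ∩ (· + T) ⁻¹' I) := h.1.inter (h.1.preimage (continuous_add_const T))
  have hJc : IsPreconnected (I ∩ (· + T) ⁻¹' I) :=
    (h.2.1.inter (h.2.1.preimage_mono (f := (· + T)) fun _ _ hab => by simpa using hab)
      ).isPreconnected
  intro t ht htT
  refine ODE_solution_unique_of_isPreconnected (v := KHField)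
    (f := fun t => (x (t + T), y (t + T), z (t + T), px (t + T), py (t + T), pz (t + T)))
    (g := fun t => rot φ (x t, y t, z t, px t, py t, pz t))
    hJ hJc (fun s hs => ?_) (fun s hs => ?_) (fun s hs => ?_) ⟨ht₀, ht₀T⟩ heq ⟨ht, htT⟩
  · exact (contDiffAt_KHField (heisenbergGauge_pos (h.2.2.2.1 _ hs.2))).exists_lipschitzOnWith
  · exact (h.hasDerivAt hs.2).comp_add_const s T
  · rw [KHField_rot]
    exact (h.hasDerivAt hs.1).rot φ

theorem eq_rot_of_consecutive_zeros (h : IsSolutionOn I x y z px py pz)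
    (hH : ∀ t ∈ I, KH (x t) (y t) (z t) (px t) (py t) (pz t) = 0)
    (hxy : ∀ t ∈ I, (x t, y t) ≠ (0, 0)) {t₀ t₁ t₂ θ₀ θ₂ : ℝ} (ht₀₁ : t₀ < t₁) (ht₁₂ : t₁ < t₂)
    (ht₀ : t₀ ∈ I) (ht₁ : t₁ ∈ I) (ht₂ : t₂ ∈ I)
    (hz₀ : z t₀ = 0) (hz₁ : z t₁ = 0) (hz₂ : z t₂ = 0)
    (hne : ∀ t ∈ Ioo t₀ t₁ ∪ Ioo t₁ t₂, z t ≠ 0)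
    (hs : sCoord (x t₂) (y t₂) (z t₂) = sCoord (x t₀) (y t₀) (z t₀))
    (hθ₀ : x t₀ = √(x t₀ ^ 2 + y t₀ ^ 2) * cos θ₀ ∧ y t₀ = √(x t₀ ^ 2 + y t₀ ^ 2) * sin θ₀)
    (hθ₂ : x t₂ = √(x t₂ ^ 2 + y t₂ ^ 2) * cos θ₂ ∧ y t₂ = √(x t₂ ^ 2 + y t₂ ^ 2) * sin θ₂) :
    (x t₂, y t₂, z t₂, px t₂, py t₂, pz t₂) =
      rot (θ₂ - θ₀) (x t₀, y t₀, z t₀, px t₀, py t₀, pz t₀) := by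
  have hR (t) (ht : t ∈ I) : 0 < x t ^ 2 + y t ^ 2 := sq_add_sq_pos (hxy t ht)
  have hJ (t) (ht : t ∈ I) : Jmom (x t) (y t) (z t) (px t) (py t) (pz t) =
      Jmom (x t₀) (y t₀) (z t₀) (px t₀) (py t₀) (pz t₀) :=
    h.eq_of_hasDerivAt_zero (fun s hs => by simpa [hH s hs] using h.hasDerivAt_Jmom hs) ht ht₀
  have hL : pTheta (x t₂) (y t₂) (px t₂) (py t₂) = pTheta (x t₀) (y t₀) (px t₀) (py t₀) :=
    h.eq_of_hasDerivAt_zero (fun s hs => h.hasDerivAt_pTheta hs) ht₂ ht₀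
  have hż (t) (ht : t ∈ I) (hz : z t = 0) :
      (KHField (x t, y t, z t, px t, py t, pz t)).2.2.1 ^ 2 =
        (1 / (4 * π) - Jmom (x t₀) (y t₀) (z t₀) (px t₀) (py t₀) (pz t₀) ^ 2) / 4 := by
    have := Jmom_sq_add_sq_of_KH_eq_zero (hR t ht) hz (hH t ht)
    rw [hJ t ht] at this
    linarith
  have hż₂ := (h.hasDerivAt ht₀).snd.snd.fst.eq_of_consecutive_zeros
    (h.hasDerivAt ht₁).snd.snd.fst (h.hasDerivAt ht₂).snd.snd.fst ht₀₁ ht₁₂ hz₀ hz₁ hz₂ hne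
    (HasDerivAt.continuousOn fun t ht => (h.hasDerivAt (h.2.1.out ht₀ ht₂ ht)).snd.snd.fst)
    (by rw [hż t₁ ht₁ hz₁, hż t₀ ht₀ hz₀]) (by rw [hż t₂ ht₂ hz₂, hż t₀ ht₀ hz₀])
  have hR₂ := sq_add_sq_eq_of_sCoord_eq (hR t₂ ht₂) (hR t₀ ht₀) hz₂ hz₀ hs
  have hpz : pz t₂ = pz t₀ := by
    have h₂ := two_mul_KHField_z (x t₂) (y t₂) (z t₂) (px t₂) (py t₂) (pz t₂)
    rw [hż₂, two_mul_KHField_z, hL, hR₂] at h₂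
    exact mul_right_cancel₀ (hR t₀ ht₀).ne' (by linarith)
  rw [hR₂] at hθ₂
  obtain ⟨hx₂, hy₂⟩ := rot_polar hθ₀.1 hθ₀.2 hθ₂.1 hθ₂.2
  obtain ⟨hpx₂, hpy₂⟩ := momentum_eq_rot (hR t₂ ht₂) hx₂ hy₂
    (by simpa [Jmom, hz₀, hz₂] using hJ t₂ ht₂) hL
  simp only [rot, Prod.mk.injEq]
  exact ⟨hx₂, hy₂, hz₂.trans hz₀.symm, hpx₂, hpy₂, hpz⟩

end IsSolutionOn

theorem kepler_heisenberg_quasi_periodic_general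
    (I : Set ℝ) (x y z px py pz θ : ℝ → ℝ) (t₀ t₁ t₂ : ℝ)
    (hsol : IsMaximalSolution I x y z px py pz)
    (hH : ∀ t ∈ I, KH (x t) (y t) (z t) (px t) (py t) (pz t) = 0)
    (hxy : ∀ t ∈ I, (x t, y t) ≠ (0, 0))
    (hθ : ∀ t ∈ I, x t = Real.sqrt ((x t)^2 + (y t)^2) * Real.cos (θ t) ∧
                   y t = Real.sqrt ((x t)^2 + (y t)^2) * Real.sin (θ t))
    (ht01 : t₀ < t₁) (ht12 : t₁ < t₂)
    (ht₀I : t₀ ∈ I) (ht₁I : t₁ ∈ I) (ht₂I : t₂ ∈ I)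
    (hz₀ : z t₀ = 0) (hz₁ : z t₁ = 0) (hz₂ : z t₂ = 0)
    (hconsec : ∀ t, ((t₀ < t ∧ t < t₁) ∨ (t₁ < t ∧ t < t₂)) → z t ≠ 0)
    (hs : sCoord (x t₂) (y t₂) (z t₂) = sCoord (x t₀) (y t₀) (z t₀))
    (φ T : ℝ) (hφ : φ = θ t₂ - θ t₀) (hT : T = t₂ - t₀) :
    ∀ t ∈ I, t + T ∈ I →
      (x (t + T), y (t + T), z (t + T), px (t + T), py (t + T), pz (t + T)) =
        rot φ (x t, y t, z t, px t, py t, pz t) := by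
  obtain ⟨hsol, -⟩ := hsol
  have hT₀ : t₀ + T = t₂ := by rw [hT]; ring
  refine hsol.add_eq_rot_of_add_eq_rot ht₀I (hT₀ ▸ ht₂I) ?_
  rw [hT₀, hφ]
  exact hsol.eq_rot_of_consecutive_zeros hH hxy ht01 ht12 ht₀I ht₁I ht₂I hz₀ hz₁ hz₂
    hconsec hs (hθ t₀ ht₀I) (hθ t₂ ht₂I)

/-- **Corollary (quasi-periodicity when `J = 0`).** If the dilation factor is `1`
(i.e. `s(t₂) = s(t₀)`), then with `φ = θ(t₂) − θ(t₀)` and `T = t₂ − t₀` the orbit is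
quasi-periodic: `c(t + T) = ρ_φ(c(t))`. -/
theorem kepler_heisenberg_quasi_periodic
    (I : Set ℝ) (x y z px py pz θ : ℝ → ℝ) (t₀ t₁ t₂ : ℝ)
    (hsol : IsMaximalSolution I x y z px py pz)
    (hH : ∀ t ∈ I, KH (x t) (y t) (z t) (px t) (py t) (pz t) = 0)
    (hxy : ∀ t ∈ I, (x t, y t) ≠ (0, 0))
    (hθcont : ContinuousOn θ I)
    (hθ : ∀ t ∈ I, x t = Real.sqrt ((x t)^2 + (y t)^2) * Real.cos (θ t) ∧
                   y t = Real.sqrt ((x t)^2 + (y t)^2) * Real.sin (θ t))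
    (ht01 : t₀ < t₁) (ht12 : t₁ < t₂)
    (ht₀I : t₀ ∈ I) (ht₁I : t₁ ∈ I) (ht₂I : t₂ ∈ I)
    (hz₀ : z t₀ = 0) (hz₁ : z t₁ = 0) (hz₂ : z t₂ = 0)
    (hconsec : ∀ t, ((t₀ < t ∧ t < t₁) ∨ (t₁ < t ∧ t < t₂)) → z t ≠ 0)
    (hs : sCoord (x t₂) (y t₂) (z t₂) = sCoord (x t₀) (y t₀) (z t₀))
    (φ T : ℝ) (hφ : φ = θ t₂ - θ t₀) (hT : T = t₂ - t₀) :
    ∀ t ∈ I, t + T ∈ I →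
      (x (t + T), y (t + T), z (t + T), px (t + T), py (t + T), pz (t + T)) =
        rot φ (x t, y t, z t, px t, py t, pz t) :=
  kepler_heisenberg_quasi_periodic_general I x y z px py pz θ t₀ t₁ t₂ hsol hH hxy hθ ht01 ht12 ht₀I
    ht₁I ht₂I hz₀ hz₁ hz₂ hconsec hs φ T hφ hT
end

section
/- Along any solution c of the Kepler–Heisenberg Hamilton equations, the dilational momentum J(t) = x(t)·p_x(t) + y(t)·p_y(t) + 2z(t)·p_z(t) is differentiable and satisfies J'(t) = 2·H(c(t)) for all t. In particular, if H(c(t)) = 0 for all t, then J is constant along the solution. -/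
open Real Set

/-!
The dilational momentum `J` generates the lifted Carnot dilations `dil l`, and
`KH (dil l q) = l⁻² * KH q`. Differentiating at `l = 1` gives a weighted Euler identity for the
partial derivatives of `KH`; by Hamilton's equations and the product rule its left side is `J'`,
so `J' = 2 KH`. At zero energy `J' = 0` on the connected interval `I`, so `J` is constant.
-/

lemma heisenberg_gauge_pos {x y z : ℝ} (h : (x, y, z) ≠ (0, 0, 0)) :
    0 < (x^2 + y^2)^2 + 16 * z^2 := by
  refine lt_of_le_of_ne (by positivity) fun h0 => h ?_
  obtain ⟨hxy, hz⟩ := (add_eq_zero_iff_of_nonneg (by positivity) (by positivity)).1 h0.symm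
  obtain ⟨hx, hy⟩ := (add_eq_zero_iff_of_nonneg (by positivity) (by positivity)).1
    (pow_eq_zero_iff two_ne_zero |>.1 hxy)
  exact Prod.ext (by simpa using hx) (Prod.ext (by simpa using hy) (by simpa using hz))

lemma HasDerivAt.one_div_const_mul_sqrt {g : ℝ → ℝ} {g' t : ℝ} (c : ℝ) (hc : c ≠ 0)
    (hg : HasDerivAt g g' t) (hpos : 0 < g t) :
    HasDerivAt (fun a => 1 / (c * √(g a))) (-g' / (2 * c * g t * √(g t))) t := by
  have hs : √(g t) ≠ 0 := (sqrt_pos.2 hpos).ne'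
  simp only [one_div]
  refine ((hg.sqrt hpos.ne').const_mul c |>.fun_inv (mul_ne_zero hc hs)).congr_deriv ?_
  rw [mul_pow, sq_sqrt hpos.le]
  field_simp

section PartialDerivatives

variable (x y z px py pz : ℝ)

lemma hasDerivAt_KH_px :
    HasDerivAt (fun a => KH x y z a py pz) (px - (1/2) * y * pz) px := by
  unfold KH
  refine ((((hasDerivAt_id' (x := px)).sub_const ((1/2) * y * pz)).fun_pow 2
    |>.add_const _ |>.const_mul (1/2)).sub_const _).congr_deriv ?_
  ring

lemma hasDerivAt_KH_py :
    HasDerivAt (fun a => KH x y z px a pz) (py + (1/2) * x * pz) py := by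
  unfold KH
  refine ((((hasDerivAt_id' (x := py)).add_const ((1/2) * x * pz)).fun_pow 2
    |>.const_add _ |>.const_mul (1/2)).sub_const _).congr_deriv ?_
  ring

lemma hasDerivAt_KH_pz :
    HasDerivAt (fun a => KH x y z px py a)
      ((x * (py + (1/2) * x * pz) - y * (px - (1/2) * y * pz)) / 2) pz := by
  unfold KH
  have hP := ((hasDerivAt_id' (x := pz)).const_mul ((1/2) * y)).const_sub px |>.fun_pow 2
  have hQ := ((hasDerivAt_id' (x := pz)).const_mul ((1/2) * x)).const_add py |>.fun_pow 2
  refine ((hP.add hQ).const_mul (1/2) |>.sub_const _).congr_deriv ?_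
  ring

variable {x y z}

lemma hasDerivAt_KH_x (h : (x, y, z) ≠ (0, 0, 0)) :
    HasDerivAt (fun a => KH a y z px py pz)
      (pz / 2 * (py + (1/2) * x * pz)
        + x * (x^2 + y^2) / (4 * π * ((x^2 + y^2)^2 + 16 * z^2) * √((x^2 + y^2)^2 + 16 * z^2)))
      x := by
  unfold KH
  have hQ := ((hasDerivAt_id' (x := x)).const_mul (1/2)).mul_const pz |>.const_add py |>.fun_pow 2
  have hρ := (hasDerivAt_pow 2 x).add_const (y^2) |>.fun_pow 2 |>.add_const (16 * z^2)
  refine ((hQ.const_add _).const_mul (1/2) |>.sub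
    (hρ.one_div_const_mul_sqrt (8 * π) (by positivity) (heisenberg_gauge_pos h))).congr_deriv ?_
  field_simp
  ring

lemma hasDerivAt_KH_y (h : (x, y, z) ≠ (0, 0, 0)) :
    HasDerivAt (fun a => KH x a z px py pz)
      (-(pz / 2) * (px - (1/2) * y * pz)
        + y * (x^2 + y^2) / (4 * π * ((x^2 + y^2)^2 + 16 * z^2) * √((x^2 + y^2)^2 + 16 * z^2)))
      y := by
  unfold KH
  have hP := ((hasDerivAt_id' (x := y)).const_mul (1/2)).mul_const pz |>.const_sub px |>.fun_pow 2
  have hρ := (hasDerivAt_pow 2 y).const_add (x^2) |>.fun_pow 2 |>.add_const (16 * z^2)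
  refine ((hP.add_const _).const_mul (1/2) |>.sub
    (hρ.one_div_const_mul_sqrt (8 * π) (by positivity) (heisenberg_gauge_pos h))).congr_deriv ?_
  field_simp
  ring

lemma hasDerivAt_KH_z (h : (x, y, z) ≠ (0, 0, 0)) :
    HasDerivAt (fun a => KH x y a px py pz)
      (2 * z / (π * ((x^2 + y^2)^2 + 16 * z^2) * √((x^2 + y^2)^2 + 16 * z^2))) z := by
  unfold KH
  have hρ := (hasDerivAt_pow 2 z).const_mul 16 |>.const_add ((x^2 + y^2)^2)
  refine ((hρ.one_div_const_mul_sqrt (8 * π) (by positivity)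
    (heisenberg_gauge_pos h)).const_sub _).congr_deriv ?_
  field_simp
  ring

end PartialDerivatives

theorem KH_dilation_euler {x y z : ℝ} (px py pz : ℝ) (h : (x, y, z) ≠ (0, 0, 0)) :
    px * deriv (fun a => KH x y z a py pz) px + py * deriv (fun a => KH x y z px a pz) py
      + 2 * pz * deriv (fun a => KH x y z px py a) pz
      - x * deriv (fun a => KH a y z px py pz) x - y * deriv (fun a => KH x a z px py pz) y
      - 2 * z * deriv (fun a => KH x y a px py pz) z
      = 2 * KH x y z px py pz := by
  rw [(hasDerivAt_KH_px ..).deriv, (hasDerivAt_KH_py ..).deriv, (hasDerivAt_KH_pz ..).deriv,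
    (hasDerivAt_KH_x _ _ _ h).deriv, (hasDerivAt_KH_y _ _ _ h).deriv,
    (hasDerivAt_KH_z _ _ _ h).deriv]
  have hρ := heisenberg_gauge_pos h
  unfold KH
  field_simp
  ring

theorem IsSolutionOn.hasDerivAt_Jmom_s4 {I : Set ℝ} {x y z px py pz : ℝ → ℝ}
    (hsol : IsSolutionOn I x y z px py pz) {t : ℝ} (ht : t ∈ I) :
    HasDerivAt (fun t => Jmom (x t) (y t) (z t) (px t) (py t) (pz t))
      (2 * KH (x t) (y t) (z t) (px t) (py t) (pz t)) t := by
  obtain ⟨hx, hy, hz, hpx, hpy, hpz⟩ := hsol.2.2.2.2 t ht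
  refine (((hx.mul hpx).add (hy.mul hpy)).add ((hz.const_mul 2).mul hpz)).congr_deriv ?_
  linear_combination KH_dilation_euler (px t) (py t) (pz t) (hsol.2.2.2.1 t ht)

/-- Along any solution, the dilational momentum `J = x·pₓ + y·p_y + 2z·p_z` is differentiable
with `J' = 2H`; in particular `J` is constant along zero-energy solutions. -/
theorem kepler_heisenberg_J_deriv
    (I : Set ℝ) (x y z px py pz : ℝ → ℝ)
    (hsol : IsSolutionOn I x y z px py pz) :
    (∀ t ∈ I, HasDerivAt (fun t => Jmom (x t) (y t) (z t) (px t) (py t) (pz t))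
        (2 * KH (x t) (y t) (z t) (px t) (py t) (pz t)) t) ∧
    ((∀ t ∈ I, KH (x t) (y t) (z t) (px t) (py t) (pz t) = 0) →
      ∀ t ∈ I, ∀ t' ∈ I,
        Jmom (x t) (y t) (z t) (px t) (py t) (pz t) =
          Jmom (x t') (y t') (z t') (px t') (py t') (pz t')) := by
  refine ⟨fun t ht => hsol.hasDerivAt_Jmom_s4 ht, fun hH t ht t' ht' => ?_⟩
  refine hsol.1.is_const_of_deriv_eq_zero hsol.2.1.isPreconnected
    (fun s hs => (hsol.hasDerivAt_Jmom_s4 hs).differentiableAt.differentiableWithinAt)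
    (fun s hs => ?_) ht ht'
  simp [(hsol.hasDerivAt_Jmom_s4 hs).deriv, hH s hs]
end

section
/- At every point q = (x, y, z, p_x, p_y, p_z) ∈ ℝ^6 with x² + y² > 0, the Kepler–Heisenberg Hamiltonian satisfies the identity H(q) = (1/2)·exp(−2s)·( cos(u)·p_s² + 2·sin(u)·p_s·p_θ + sec(u)·p_θ² + 4·cos(u)·p_θ·p_u + 4·cos(u)·p_u² − 1/(4π) ), where s, u, p_s, p_θ, p_u are the adapted coordinate functions of q; equivalently, H = (1/2)·exp(−2s)·( [p_s, p_θ, p_u]·M·[p_s, p_θ, p_u]ᵀ − 1/(4π) ) with M the symmetric matrix with rows (cos u, sin u, 0), (sin u, sec u, 2 cos u), (0, 2 cos u, 4 cos u). -/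
/-! With `r = x² + y²` and `w = √(r² + 16z²)` one has `e^{-2s} = 1/w`, `cos u = r/w` and
`sin u = 4z/w`. The potential terms then agree on the nose, and after clearing denominators
the kinetic terms reduce to the polynomial identity
`r·w²·((pₓ − y p_z/2)² + (p_y + x p_z/2)²)
  = r² p_s² + 8rz p_s p_θ + w² p_θ² + 4r² p_θ p_u + 4r² p_u²`. -/

open Real Set

lemma Real.sqrt_one_add_div_sq {a : ℝ} (ha : 0 < a) (b : ℝ) :
    √(1 + (b / a) ^ 2) = √(a ^ 2 + b ^ 2) / a := by
  rw [← sqrt_sq ha.le, ← sqrt_div' _ (sq_nonneg a), sqrt_sq ha.le]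
  congr 1
  field_simp

lemma Real.cos_arctan_div {a : ℝ} (ha : 0 < a) (b : ℝ) :
    cos (arctan (b / a)) = a / √(a ^ 2 + b ^ 2) := by
  rw [cos_arctan, sqrt_one_add_div_sq ha, one_div_div]

lemma Real.sin_arctan_div {a : ℝ} (ha : 0 < a) (b : ℝ) :
    sin (arctan (b / a)) = b / √(a ^ 2 + b ^ 2) := by
  rw [sin_arctan, sqrt_one_add_div_sq ha, div_div_div_cancel_right₀ ha.ne']

lemma Real.exp_neg_half_mul_log {D : ℝ} (hD : 0 < D) : exp (-(1 / 2) * log D) = (√D)⁻¹ := by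
  rw [sqrt_eq_rpow, ← rpow_neg hD.le, rpow_def_of_pos hD, mul_comm]

lemma exp_neg_two_mul_sCoord {x y z : ℝ} (h : 0 < (x ^ 2 + y ^ 2) ^ 2 + 16 * z ^ 2) :
    exp (-2 * sCoord x y z) = (√((x ^ 2 + y ^ 2) ^ 2 + 16 * z ^ 2))⁻¹ := by
  rw [sCoord, ← exp_neg_half_mul_log h]
  ring_nf

lemma cos_uCoord {x y z : ℝ} (h : 0 < x ^ 2 + y ^ 2) :
    cos (uCoord x y z) = (x ^ 2 + y ^ 2) / √((x ^ 2 + y ^ 2) ^ 2 + 16 * z ^ 2) := by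
  rw [uCoord, cos_arctan_div h]
  ring_nf

lemma sin_uCoord {x y z : ℝ} (h : 0 < x ^ 2 + y ^ 2) :
    sin (uCoord x y z) = 4 * z / √((x ^ 2 + y ^ 2) ^ 2 + 16 * z ^ 2) := by
  rw [uCoord, sin_arctan_div h]
  ring_nf

lemma horizontal_momenta_sq_eq_adapted_form (x y z px py pz : ℝ) (h : x ^ 2 + y ^ 2 ≠ 0) :
    (x ^ 2 + y ^ 2) * ((x ^ 2 + y ^ 2) ^ 2 + 16 * z ^ 2) *
        ((px - 1 / 2 * y * pz) ^ 2 + (py + 1 / 2 * x * pz) ^ 2) =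
      (x ^ 2 + y ^ 2) ^ 2 * Jmom x y z px py pz ^ 2
        + 8 * (x ^ 2 + y ^ 2) * z * Jmom x y z px py pz * pTheta x y px py
        + ((x ^ 2 + y ^ 2) ^ 2 + 16 * z ^ 2) * pTheta x y px py ^ 2
        + 4 * (x ^ 2 + y ^ 2) ^ 2 * pTheta x y px py * pU x y z px py pz
        + 4 * (x ^ 2 + y ^ 2) ^ 2 * pU x y z px py pz ^ 2 := by
  rw [Jmom, pTheta, pU]
  field_simp
  ring

/-- The Hamiltonian in the adapted coordinates: wherever `x² + y² > 0`,
`H = (1/2)·e^{−2s}·(cos u·p_s² + 2 sin u·p_s·p_θ + sec u·p_θ² + 4 cos u·p_θ·p_u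
+ 4 cos u·p_u² − 1/(4π))`. -/
theorem kepler_heisenberg_H_adapted_coords
    (x y z px py pz : ℝ) (h : x^2 + y^2 > 0) :
    KH x y z px py pz =
      (1/2) * Real.exp (-2 * sCoord x y z) *
        (Real.cos (uCoord x y z) * (Jmom x y z px py pz)^2
          + 2 * Real.sin (uCoord x y z) * Jmom x y z px py pz * pTheta x y px py
          + (Real.cos (uCoord x y z))⁻¹ * (pTheta x y px py)^2
          + 4 * Real.cos (uCoord x y z) * pTheta x y px py * pU x y z px py pz
          + 4 * Real.cos (uCoord x y z) * (pU x y z px py pz)^2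
          - 1 / (4 * π)) := by
  have hD : 0 < (x ^ 2 + y ^ 2) ^ 2 + 16 * z ^ 2 := by positivity
  have hw : 0 < √((x ^ 2 + y ^ 2) ^ 2 + 16 * z ^ 2) := sqrt_pos.mpr hD
  have hkin := horizontal_momenta_sq_eq_adapted_form x y z px py pz h.ne'
  rw [← sq_sqrt hD.le] at hkin
  rw [KH, exp_neg_two_mul_sCoord hD, cos_uCoord h, sin_uCoord h]
  field_simp
  linear_combination 128 * π * hkin
end

section
/- The dilations and rotations act as translations in the adapted coordinates: for every point q ∈ ℝ^6 with x² + y² > 0, (a) for every λ > 0, s(δ_λ(q)) = s(q) + log λ, while u, p_s, p_θ, p_u take the same values at δ_λ(q) as at q; and (b) for every φ ∈ ℝ, the functions s, u, p_s, p_θ, p_u take the same values at ρ_φ(q) as at q, while the planar position of ρ_φ(q), viewed as the complex number x + iy, is multiplied by e^{iφ} (so the argument of (x, y) shifts by φ modulo 2π). -/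
open Real Set

/-! The adapted coordinates are weighted-homogeneous of degree `0` for the Carnot dilations
(`x, y` of weight `1`, `z` of weight `2`, momenta of the opposite weights), except `s`, which is
`(1/4)·log` of a homogeneous function of degree `4`, so it shifts by `(1/4)·log λ⁴ = log λ`.
Under rotations they only involve the rotation invariants `x² + y²`, `x pₓ + y p_y` and
`x p_y − y pₓ`, and the rotated position is `e^{iφ}(x + iy)` by Euler's formula. -/

section Dilation

variable {lam : ℝ}

theorem sCoord_dil (hlam : 0 < lam) {x y z : ℝ} (hq : (x^2 + y^2)^2 + 16 * z^2 ≠ 0) :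
    sCoord (lam * x) (lam * y) (lam^2 * z) = sCoord x y z + Real.log lam := by
  have hscale : ((lam * x)^2 + (lam * y)^2)^2 + 16 * (lam^2 * z)^2
      = lam^4 * ((x^2 + y^2)^2 + 16 * z^2) := by ring
  rw [sCoord, sCoord, hscale, Real.log_mul (by positivity) hq, Real.log_pow]
  push_cast
  ring

theorem sq_add_sq_dil (lam x y : ℝ) : (lam * x)^2 + (lam * y)^2 = lam^2 * (x^2 + y^2) := by
  ring

theorem uCoord_dil (hlam : lam ≠ 0) (x y z : ℝ) :
    uCoord (lam * x) (lam * y) (lam^2 * z) = uCoord x y z := by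
  rw [uCoord, uCoord, sq_add_sq_dil, mul_left_comm, mul_div_mul_left _ _ (pow_ne_zero 2 hlam)]

theorem Jmom_dil (hlam : lam ≠ 0) (x y z px py pz : ℝ) :
    Jmom (lam * x) (lam * y) (lam^2 * z) (lam⁻¹ * px) (lam⁻¹ * py) ((lam^2)⁻¹ * pz) =
      Jmom x y z px py pz := by
  unfold Jmom
  field_simp

theorem pTheta_dil (hlam : lam ≠ 0) (x y px py : ℝ) :
    pTheta (lam * x) (lam * y) (lam⁻¹ * px) (lam⁻¹ * py) = pTheta x y px py := by
  unfold pTheta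
  field_simp

theorem pU_dil (hlam : lam ≠ 0) (x y z px py pz : ℝ) :
    pU (lam * x) (lam * y) (lam^2 * z) (lam⁻¹ * px) (lam⁻¹ * py) ((lam^2)⁻¹ * pz) =
      pU x y z px py pz := by
  rw [pU, pU, sq_add_sq_dil]
  field_simp

end Dilation

section Rotation

variable (φ : ℝ)

theorem sq_add_sq_rotate (x y : ℝ) :
    (x * cos φ - y * sin φ)^2 + (x * sin φ + y * cos φ)^2 = x^2 + y^2 := by
  linear_combination (x^2 + y^2) * sin_sq_add_cos_sq φ

theorem dot_rotate (x y px py : ℝ) :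
    (x * cos φ - y * sin φ) * (px * cos φ - py * sin φ)
      + (x * sin φ + y * cos φ) * (px * sin φ + py * cos φ) = x * px + y * py := by
  linear_combination (x * px + y * py) * sin_sq_add_cos_sq φ

theorem sCoord_rotate (x y z : ℝ) :
    sCoord (x * cos φ - y * sin φ) (x * sin φ + y * cos φ) z = sCoord x y z := by
  rw [sCoord, sq_add_sq_rotate, sCoord]

theorem uCoord_rotate (x y z : ℝ) :
    uCoord (x * cos φ - y * sin φ) (x * sin φ + y * cos φ) z = uCoord x y z := by
  rw [uCoord, sq_add_sq_rotate, uCoord]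

theorem Jmom_rotate (x y z px py pz : ℝ) :
    Jmom (x * cos φ - y * sin φ) (x * sin φ + y * cos φ) z
        (px * cos φ - py * sin φ) (px * sin φ + py * cos φ) pz = Jmom x y z px py pz := by
  rw [Jmom, dot_rotate, Jmom]

theorem pTheta_rotate (x y px py : ℝ) :
    pTheta (x * cos φ - y * sin φ) (x * sin φ + y * cos φ)
        (px * cos φ - py * sin φ) (px * sin φ + py * cos φ) = pTheta x y px py := by
  unfold pTheta
  linear_combination (x * py - y * px) * sin_sq_add_cos_sq φ

theorem pU_rotate (x y z px py pz : ℝ) :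
    pU (x * cos φ - y * sin φ) (x * sin φ + y * cos φ) z
        (px * cos φ - py * sin φ) (px * sin φ + py * cos φ) pz = pU x y z px py pz := by
  rw [pU, sq_add_sq_rotate, dot_rotate, pU]

theorem ofReal_rotate_add_mul_I (x y : ℝ) :
    ((x * cos φ - y * sin φ : ℝ) : ℂ) + ((x * sin φ + y * cos φ : ℝ) : ℂ) * Complex.I =
      Complex.exp (φ * Complex.I) * ((x : ℂ) + (y : ℂ) * Complex.I) := by
  rw [Complex.exp_mul_I]
  push_cast
  linear_combination -(y * Complex.sin φ) * Complex.I_sq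

end Rotation

/-- Dilations and rotations act as translations in the adapted coordinates:
(a) dilation by `λ > 0` shifts `s` by `log λ` and fixes `u, p_s, p_θ, p_u`;
(b) rotation by `φ` fixes `s, u, p_s, p_θ, p_u` and multiplies the planar position,
viewed as the complex number `x + iy`, by `e^{iφ}`. -/
theorem kepler_heisenberg_coord_actions
    (x y z px py pz : ℝ) (h : x^2 + y^2 > 0) :
    (∀ lam : ℝ, 0 < lam →
      sCoord (lam * x) (lam * y) (lam^2 * z) = sCoord x y z + Real.log lam ∧
      uCoord (lam * x) (lam * y) (lam^2 * z) = uCoord x y z ∧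
      Jmom (lam * x) (lam * y) (lam^2 * z) (lam⁻¹ * px) (lam⁻¹ * py) ((lam^2)⁻¹ * pz) =
        Jmom x y z px py pz ∧
      pTheta (lam * x) (lam * y) (lam⁻¹ * px) (lam⁻¹ * py) = pTheta x y px py ∧
      pU (lam * x) (lam * y) (lam^2 * z) (lam⁻¹ * px) (lam⁻¹ * py) ((lam^2)⁻¹ * pz) =
        pU x y z px py pz) ∧
    (∀ φ : ℝ,
      sCoord (x * Real.cos φ - y * Real.sin φ) (x * Real.sin φ + y * Real.cos φ) z =
        sCoord x y z ∧
      uCoord (x * Real.cos φ - y * Real.sin φ) (x * Real.sin φ + y * Real.cos φ) z =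
        uCoord x y z ∧
      Jmom (x * Real.cos φ - y * Real.sin φ) (x * Real.sin φ + y * Real.cos φ) z
          (px * Real.cos φ - py * Real.sin φ) (px * Real.sin φ + py * Real.cos φ) pz =
        Jmom x y z px py pz ∧
      pTheta (x * Real.cos φ - y * Real.sin φ) (x * Real.sin φ + y * Real.cos φ)
          (px * Real.cos φ - py * Real.sin φ) (px * Real.sin φ + py * Real.cos φ) =
        pTheta x y px py ∧
      pU (x * Real.cos φ - y * Real.sin φ) (x * Real.sin φ + y * Real.cos φ) z
          (px * Real.cos φ - py * Real.sin φ) (px * Real.sin φ + py * Real.cos φ) pz =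
        pU x y z px py pz ∧
      ((x * Real.cos φ - y * Real.sin φ : ℝ) : ℂ) +
          ((x * Real.sin φ + y * Real.cos φ : ℝ) : ℂ) * Complex.I =
        Complex.exp (φ * Complex.I) * ((x : ℂ) + (y : ℂ) * Complex.I)) := by
  have hq : (x^2 + y^2)^2 + 16 * z^2 ≠ 0 := by positivity
  refine ⟨fun lam hlam => ?_, fun φ => ?_⟩
  · have hlam0 := hlam.ne'
    exact ⟨sCoord_dil hlam hq, uCoord_dil hlam0 x y z, Jmom_dil hlam0 x y z px py pz,
      pTheta_dil hlam0 x y px py, pU_dil hlam0 x y z px py pz⟩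
  · exact ⟨sCoord_rotate φ x y z, uCoord_rotate φ x y z, Jmom_rotate φ x y z px py pz,
      pTheta_rotate φ x y px py, pU_rotate φ x y z px py pz, ofReal_rotate_add_mul_I φ x y⟩
end

section
/- Let q = (x, y, z, p_x, p_y, p_z) ∈ ℝ^6 with x² + y² > 0, z = 0, and H(q) = 0. Then, with p_u = (1/4)·p_z·(x² + y²) (its value when z = 0), p_θ = x·p_y − y·p_x, and J = x·p_x + y·p_y, one has 4·p_u² + 4·p_θ·p_u + J² + p_θ² − 1/(4π) = 0; equivalently (2·p_u + p_θ)² = 1/(4π) − J². In particular p_u = −(1/2)·p_θ ± (1/2)·√(1/(4π) − J²), and 1/(4π) − J² ≥ 0. -/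
open Real Set

/- On the plane `z = 0` the potential is `-1/(8π r)` with `r = x² + y²`, and the Lagrange identity
`r (a² + b²) = (x a + y b)² + (x b - y a)²` splits `r` times the kinetic term into `J² + (p_θ + 2 p_u)²`,
so zero energy reads `J² + (2 p_u + p_θ)² = 1/(4π)`. -/

lemma sq_add_sq_mul_kinetic (x y px py pz : ℝ) :
    (x^2 + y^2) * ((px - (1/2) * y * pz)^2 + (py + (1/2) * x * pz)^2) =
      (x * px + y * py)^2 + (2 * ((1/4) * pz * (x^2 + y^2)) + (x * py - y * px))^2 := by
  ring

lemma KH_of_z_eq_zero (x y px py pz : ℝ) :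
    KH x y 0 px py pz =
      (1/2) * ((px - (1/2) * y * pz)^2 + (py + (1/2) * x * pz)^2) - 1 / (8 * π * (x^2 + y^2)) := by
  have hsqrt : √((x^2 + y^2)^2 + 16 * 0^2) = x^2 + y^2 := by
    rw [zero_pow two_ne_zero, mul_zero, add_zero, Real.sqrt_sq (by positivity)]
  rw [KH, hsqrt]

lemma sq_add_sq_eq_of_KH_eq_zero {x y px py pz : ℝ} (h : 0 < x^2 + y^2)
    (hH : KH x y 0 px py pz = 0) :
    (x * px + y * py)^2 + (2 * ((1/4) * pz * (x^2 + y^2)) + (x * py - y * px))^2 = 1 / (4 * π) := by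
  rw [KH_of_z_eq_zero] at hH
  calc _ = (x^2 + y^2) * ((px - (1/2) * y * pz)^2 + (py + (1/2) * x * pz)^2) :=
        (sq_add_sq_mul_kinetic x y px py pz).symm
    _ = 2 * (x^2 + y^2) * (1 / (8 * π * (x^2 + y^2))) := by linear_combination 2 * (x^2 + y^2) * hH
    _ = 1 / (4 * π) := by field_simp; ring

lemma eq_sqrt_or_eq_neg_sqrt_of_sq_eq {t c : ℝ} (ht : t^2 = c) : t = √c ∨ t = -√c :=
  sq_eq_sq_iff_eq_or_eq_neg.1 (ht.trans (Real.sq_sqrt (ht ▸ sq_nonneg t)).symm)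

/-- At a zero-energy phase point in the plane `z = 0` (off the `z`-axis), with
`p_u = (1/4)·p_z·(x² + y²)`, `p_θ = x·p_y − y·pₓ` and `J = x·pₓ + y·p_y`:
`4p_u² + 4p_θ·p_u + J² + p_θ² − 1/(4π) = 0`, equivalently `(2p_u + p_θ)² = 1/(4π) − J²`;
in particular `p_u = −p_θ/2 ± (1/2)√(1/(4π) − J²)` and `1/(4π) − J² ≥ 0`. -/
theorem kepler_heisenberg_pu_on_zero_plane
    (x y z px py pz : ℝ) (h : x^2 + y^2 > 0) (hz : z = 0)
    (hH : KH x y z px py pz = 0)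
    (pu pθ J : ℝ)
    (hpu : pu = (1/4) * pz * (x^2 + y^2))
    (hpθ : pθ = x * py - y * px)
    (hJ : J = x * px + y * py) :
    4 * pu^2 + 4 * pθ * pu + J^2 + pθ^2 - 1 / (4 * π) = 0 ∧
    (2 * pu + pθ)^2 = 1 / (4 * π) - J^2 ∧
    (pu = -(1/2) * pθ + (1/2) * Real.sqrt (1 / (4 * π) - J^2) ∨
     pu = -(1/2) * pθ - (1/2) * Real.sqrt (1 / (4 * π) - J^2)) ∧
    1 / (4 * π) - J^2 ≥ 0 := by
  subst hz hpu hpθ hJ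
  have hsq := eq_sub_of_add_eq' (sq_add_sq_eq_of_KH_eq_zero h hH)
  refine ⟨by linear_combination hsq, hsq, ?_, hsq ▸ sq_nonneg _⟩
  rcases eq_sqrt_or_eq_neg_sqrt_of_sq_eq hsq with hroot | hroot
  · left; linear_combination (1/2) * hroot
  · right; linear_combination (1/2) * hroot
end

section
/- Let c : I → ℝ^6 be a solution of the Kepler–Heisenberg Hamilton equations with H(c(t)) = 0 for all t ∈ I and (x(t), y(t)) ≠ (0, 0) for all t ∈ I, and let J denote the (constant) dilational momentum. If z(t*) = 0 at some time t* ∈ I, then the derivative of z at t* satisfies z'(t*)² = (1/(4π) − J²)/4. In particular, if J² < 1/(4π), then z'(t*) ≠ 0, i.e., the orbit crosses the plane {z = 0} transversally. -/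
open Real Set

/-!
On the plane `z = 0` write `a = pₓ - y p_z / 2`, `b = p_y + x p_z / 2` for the horizontal
velocity and `r² = x² + y²`. There `z' = (x b - y a) / 2`, `J = x a + y b`, and zero energy reads
`r² (a² + b²) = 1/(4π)`. Lagrange's identity `(x a + y b)² + (x b - y a)² = r² (a² + b²)`
then gives `J² + 4 z'² = 1/(4π)`.
-/

lemma hasDerivAt_KH_pz_s19 (X Y Z PX PY PZ : ℝ) :
    HasDerivAt (fun a => KH X Y Z PX PY a)
      (-(Y / 2) * (PX - (1/2) * Y * PZ) + (X / 2) * (PY + (1/2) * X * PZ)) PZ := by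
  have ha : HasDerivAt (fun a : ℝ => PX - (1/2) * Y * a) (-((1/2) * Y)) PZ := by
    simpa using ((hasDerivAt_id PZ).const_mul ((1/2) * Y)).const_sub PX
  have hb : HasDerivAt (fun a : ℝ => PY + (1/2) * X * a) ((1/2) * X) PZ := by
    simpa using ((hasDerivAt_id PZ).const_mul ((1/2) * X)).const_add PY
  refine ((((ha.pow 2).add (hb.pow 2)).const_mul (1/2)).sub_const
    (1 / (8 * π * √((X^2 + Y^2)^2 + 16 * Z^2)))).congr_deriv ?_
  push_cast
  ring

lemma KH_z_eq_zero (X Y PX PY PZ : ℝ) :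
    KH X Y 0 PX PY PZ = (1/2) * ((PX - (1/2) * Y * PZ)^2 + (PY + (1/2) * X * PZ)^2)
      - 1 / (8 * π * (X^2 + Y^2)) := by
  rw [KH, show (X^2 + Y^2)^2 + 16 * (0:ℝ)^2 = (X^2 + Y^2)^2 by ring, sqrt_sq (by positivity)]

lemma mul_sq_velocity_of_KH_z_eq_zero {X Y PX PY PZ : ℝ} (hr : 0 < X^2 + Y^2)
    (hE : KH X Y 0 PX PY PZ = 0) :
    (X^2 + Y^2) * ((PX - (1/2) * Y * PZ)^2 + (PY + (1/2) * X * PZ)^2) = 1 / (4 * π) := by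
  rw [KH_z_eq_zero] at hE
  field_simp at hE ⊢
  linear_combination (1/2) * hE

lemma sq_deriv_KH_pz_of_KH_z_eq_zero {X Y PX PY PZ : ℝ} (hr : 0 < X^2 + Y^2)
    (hE : KH X Y 0 PX PY PZ = 0) :
    (deriv (fun a => KH X Y 0 PX PY a) PZ)^2
      = (1 / (4 * π) - (Jmom X Y 0 PX PY PZ)^2) / 4 := by
  set a := PX - (1/2) * Y * PZ
  set b := PY + (1/2) * X * PZ
  have lagrange : (X * a + Y * b)^2 + (X * b - Y * a)^2 = (X^2 + Y^2) * (a^2 + b^2) := by ring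
  have hJ : Jmom X Y 0 PX PY PZ = X * a + Y * b := by rw [Jmom]; ring
  rw [(hasDerivAt_KH_pz_s19 X Y 0 PX PY PZ).deriv, hJ]
  linear_combination (1/4) * lagrange + (1/4) * mul_sq_velocity_of_KH_z_eq_zero hr hE

/-- At a time where `z` vanishes along a zero-energy solution avoiding the `z`-axis, the
derivative of `z` satisfies `z'(t*)² = (1/(4π) − J²)/4`, with `J` the (constant) dilational
momentum; in particular if `J² < 1/(4π)` the orbit crosses `{z = 0}` transversally. -/
theorem kepler_heisenberg_transversal_crossing
    (I : Set ℝ) (x y z px py pz : ℝ → ℝ)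
    (hsol : IsSolutionOn I x y z px py pz)
    (hH : ∀ t ∈ I, KH (x t) (y t) (z t) (px t) (py t) (pz t) = 0)
    (hxy : ∀ t ∈ I, (x t, y t) ≠ (0, 0))
    (tstar : ℝ) (htstar : tstar ∈ I) (hz : z tstar = 0)
    (J : ℝ)
    (hJ : J = Jmom (x tstar) (y tstar) (z tstar) (px tstar) (py tstar) (pz tstar)) :
    (deriv z tstar)^2 = (1 / (4 * π) - J^2) / 4 ∧
    (J^2 < 1 / (4 * π) → deriv z tstar ≠ 0) := by
  have hr : 0 < x tstar ^ 2 + y tstar ^ 2 := by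
    have hne : x tstar ≠ 0 ∨ y tstar ≠ 0 :=
      not_and_or.mp (by simpa only [Ne, Prod.mk.injEq] using hxy tstar htstar)
    rcases hne with h | h <;> positivity
  have hE := hH tstar htstar
  rw [hz] at hE hJ
  have hz' := (hsol.2.2.2.2 tstar htstar).2.2.1
  rw [hz] at hz'
  have hsq : (deriv z tstar)^2 = (1 / (4 * π) - J^2) / 4 := by
    rw [hz'.deriv, hJ, sq_deriv_KH_pz_of_KH_z_eq_zero hr hE]
  refine ⟨hsq, fun hlt hzero => ?_⟩
  rw [hzero] at hsq
  linarith
end
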